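/- arXiv:1608.04638 — 2 statements merged into one kernel-verified Lean document; each statement's English description precedes it below -/
import Mathlib

section
/- Let (a_n)_{n≥0} be a sequence in a commutative ring (with a_n = 0 for n < 0 and for n > some bound), and define the formal expressions E(z) = Σ_n (1−z)^n a_n, E⁺(z) = Σ_n (1−z)^n (a_{2n} + a_{2n+1}), and E⁻(z) = Σ_n (1−z)^n (a_{2n} + a_{2n−1}). Then for z̄ = 2z − z² (so that 1 − z̄ = (1−z)²), the identity (2−z)·E(z) = (1−z)·E⁺(z̄) + E⁻(z̄) holds as polynomials in z. -/
/-! With `t = 1 - z` one has `2 - z = 1 + t` and `1 - z̄ = t²`. In `(1 + t) Σ tᵏ aₖ` the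
coefficient of `t²ⁿ` is `a₂ₙ + a₂ₙ₋₁` and that of `t²ⁿ⁺¹` is `a₂ₙ + a₂ₙ₊₁`, which are
exactly the terms of `E⁻(z̄)` and `t·E⁺(z̄)`. -/

open Polynomial Finset

theorem one_add_mul_sum_range_two_mul {S : Type*} [CommRing S] (t : S) (b : ℕ → S) (m : ℕ) :
    (1 + t) * ∑ k ∈ range (2 * m), t ^ k * b k =
      t * ∑ n ∈ range m, (t ^ 2) ^ n * (b (2 * n) + b (2 * n + 1)) +
        ∑ n ∈ range m, (t ^ 2) ^ n * (b (2 * n) + if n = 0 then 0 else b (2 * n - 1)) +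
        (t ^ 2) ^ m * (if m = 0 then 0 else b (2 * m - 1)) := by
  induction m with
  | zero => simp
  | succ m ih =>
    have h_even : t ^ (2 * m) = (t ^ 2) ^ m := pow_mul t 2 m
    have h_odd : t ^ (2 * m + 1) = (t ^ 2) ^ m * t := by rw [pow_succ, h_even]
    rw [show 2 * (m + 1) = 2 * m + 1 + 1 by ring, sum_range_succ, sum_range_succ,
      sum_range_succ, sum_range_succ, h_even, h_odd]
    simp only [Nat.add_sub_cancel, Nat.add_one_ne_zero, if_false]
    linear_combination ih

/-- Dyson/Gunson generating function identity: for a finitely supported sequence `a` in a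
commutative ring, with `E(z) = Σ (1-z)^n a_n`, `E⁺(z) = Σ (1-z)^n (a_{2n}+a_{2n+1})`,
`E⁻(z) = Σ (1-z)^n (a_{2n}+a_{2n-1})` (with `a_{-1} = 0`), and `z̄ = 2z - z²` (so
`1 - z̄ = (1-z)²`), one has `(2-z)·E(z) = (1-z)·E⁺(z̄) + E⁻(z̄)` as polynomials in `z`. -/
theorem stmt_3 {R : Type*} [CommRing R] (a : ℕ → R) (M : ℕ)
    (ha : ∀ n, M < n → a n = 0) :
    (2 - X) * ∑ n ∈ range (M + 1), (1 - X) ^ n * C (a n) =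
      (1 - X) * ∑ n ∈ range (M + 1), ((1 - X) ^ 2) ^ n * C (a (2 * n) + a (2 * n + 1)) +
        ∑ n ∈ range (M + 1),
          ((1 - X) ^ 2) ^ n * C (a (2 * n) + if n = 0 then 0 else a (2 * n - 1)) := by
  have h_extend : ∑ n ∈ range (M + 1), (1 - X) ^ n * C (a n) =
      ∑ k ∈ range (2 * (M + 1)), (1 - X) ^ k * C (a k) := by
    refine sum_subset (range_subset_range.mpr (by omega)) fun k _ hk => ?_
    rw [ha k (by simpa using hk), map_zero, mul_zero]
  have h_top : a (2 * (M + 1) - 1) = 0 := ha _ (by omega)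
  rw [h_extend, show (2 : R[X]) - X = 1 + (1 - X) by ring,
    one_add_mul_sum_range_two_mul (1 - X) (fun k => C (a k)) (M + 1)]
  simp only [C_add, apply_ite C, map_zero, h_top, Nat.add_one_ne_zero, if_false, mul_zero,
    add_zero]
end

section
/- Let s > 0 be fixed and define for 0 < |u| ≤ 2s the function K^N(u) = sin(πu)/(N sin(πu/N)), extended by 1 at u = 0. Then the 2×2 determinant K^N(0)·K^N(0) − K^N(s)·K^N(−s) (i.e., the two-point correlation R₂^{CUE}(s) = det[K^N(x_j − x_k)]_{j,k∈{0,s}}) satisfies R₂^{CUE}(s) = 1 − sin²(πs)/(π²s²) − sin²(πs)/3 · N^{−2} + O(N^{−4}) as N → ∞. -/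
/-!
With `x = π s / N` one has `K^N(s)² = (sin(πs)/(πs))² · (x / sin x)²`, so the claim reduces to
the Taylor expansion `(x / sin x)² = 1 + x²/3 + O(x⁴)` as `x → 0`. This follows from
`sin x = x - x³/6 + O(x⁵)` after dividing by `sin² x ~ x²`.
-/

open Real Filter Asymptotics

/-- The CUE kernel as a function of the difference variable, extended by `1` at `0`. -/
noncomputable def cueKdiff (N : ℝ) (u : ℝ) : ℝ :=
  if u = 0 then 1 else Real.sin (π * u) / (N * Real.sin (π * u / N))

open Topology

theorem isBigO_mul_of_tendsto {α 𝕜 : Type*} [NormedField 𝕜] {l : Filter α} {f q : α → 𝕜}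
    {c : 𝕜} (hq : Tendsto q l (𝓝 c)) : (fun x => f x * q x) =O[l] f := by
  simpa using (isBigO_refl f l).mul (hq.isBigO_one 𝕜)

theorem isBigO_sin_sub_cubic : (fun x : ℝ => sin x - (x - x ^ 3 / 6)) =O[𝓝 0] (· ^ 5) := by
  refine IsBigO.of_bound (1 / 100) ?_
  filter_upwards [Icc_mem_nhds (by norm_num : (-1 : ℝ) < 0) (by norm_num : (0 : ℝ) < 1)]
    with x hx
  have := sin_bound (abs_le.mpr hx)
  simp only [norm_eq_abs, abs_pow]
  linarith

theorem isBigO_sq_sub_mul_sin_sq :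
    (fun x : ℝ => x ^ 2 - (1 + x ^ 2 / 3) * sin x ^ 2) =O[𝓝 0] (· ^ 6) := by
  have hsin_add : (fun x : ℝ => sin x + (x - x ^ 3 / 6)) =O[𝓝 0] (· ^ 1) := by
    have hsin : sin =O[𝓝 0] (· ^ 1) :=
      isEquivalent_sin.isBigO.congr_right fun x => (pow_one x).symm
    have hcubic := isBigO_mul_of_tendsto (f := (· ^ 1)) (q := fun x : ℝ => 1 - x ^ 2 / 6)
      (Continuous.tendsto (by fun_prop) 0)
    exact (hsin.add hcubic).congr_left fun x => by ring
  have hbdd : (fun x : ℝ => 1 + x ^ 2 / 3) =O[𝓝 0] (fun _ => (1 : ℝ)) :=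
    (Continuous.tendsto (by fun_prop) 0).isBigO_one ℝ
  have hcross := (hbdd.mul isBigO_sin_sub_cubic).mul hsin_add
  -- `x² - (1 + x²/3)(x - x³/6)² = x⁶ (1/12 - x²/108)`: the cubic Taylor polynomial of `sin`
  -- already makes the left side vanish to order six.
  have hpoly := isBigO_mul_of_tendsto (f := (· ^ 6)) (q := fun x : ℝ => 1 / 12 - x ^ 2 / 108)
    (Continuous.tendsto (by fun_prop) 0)
  exact (hpoly.sub (hcross.congr_right fun x => by ring)).congr_left fun x => by ring

theorem isBigO_sq_div_sin_sq_sub :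
    (fun x : ℝ => x ^ 2 / sin x ^ 2 - (1 + x ^ 2 / 3)) =O[𝓝[≠] 0] (· ^ 4) := by
  have hinv : (fun x : ℝ => (sin x ^ 2)⁻¹) =O[𝓝 0] (fun x => (x ^ 2)⁻¹) :=
    (isEquivalent_sin.pow 2).inv.isBigO
  have hsin_ne : ∀ᶠ x in 𝓝[≠] (0 : ℝ), sin x ≠ 0 := by
    filter_upwards [nhdsWithin_le_nhds (Ioo_mem_nhds (neg_neg_of_pos pi_pos) pi_pos),
      self_mem_nhdsWithin] with x hx hx0
    exact fun h => hx0 ((sin_eq_zero_iff_of_lt_of_lt hx.1 hx.2).mp h)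
  refine ((isBigO_sq_sub_mul_sin_sq.mul hinv).mono nhdsWithin_le_nhds).congr' ?_ ?_
  · filter_upwards [hsin_ne] with x hx
    field_simp
  · refine Eventually.of_forall fun x => ?_
    rcases eq_or_ne x 0 with rfl | hx
    · simp
    · field_simp

theorem tendsto_const_div_atTop_nhdsNE_zero {c : ℝ} (hc : c ≠ 0) :
    Tendsto (fun N : ℝ => c / N) atTop (𝓝[≠] 0) :=
  tendsto_nhdsWithin_iff.mpr ⟨tendsto_const_nhds.div_atTop tendsto_id,
    (eventually_gt_atTop 0).mono fun _ hN => div_ne_zero hc hN.ne'⟩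

theorem cueKdiff_zero (N : ℝ) : cueKdiff N 0 = 1 := if_pos rfl

theorem cueKdiff_neg (N u : ℝ) : cueKdiff N (-u) = cueKdiff N u := by
  rcases eq_or_ne u 0 with rfl | hu
  · rw [neg_zero]
  · simp only [cueKdiff, neg_eq_zero, hu, if_false, mul_neg, neg_div, sin_neg, div_neg, neg_neg]

theorem cueKdiff_sq (N : ℝ) {u : ℝ} (hu : u ≠ 0) :
    cueKdiff N u ^ 2 =
      sin (π * u) ^ 2 / (π * u) ^ 2 * ((π * u / N) ^ 2 / sin (π * u / N) ^ 2) := by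
  have hπu : π * u ≠ 0 := mul_ne_zero pi_ne_zero hu
  rw [cueKdiff, if_neg hu]
  field_simp

/-- Expansion of the CUE two-point correlation function
`R₂(s) = K^N(0)² - K^N(s)K^N(-s)`:
`R₂(s) = 1 - sin²(πs)/(π²s²) - sin²(πs)/3 · N⁻² + O(N⁻⁴)` as `N → ∞`. -/
theorem stmt_11 (s : ℝ) (hs : 0 < s) :
    (fun N : ℝ =>
        (cueKdiff N 0 * cueKdiff N 0 - cueKdiff N s * cueKdiff N (-s)) -
          (1 - Real.sin (π * s) ^ 2 / (π ^ 2 * s ^ 2) -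
            Real.sin (π * s) ^ 2 / 3 * N⁻¹ ^ 2))
      =O[atTop] (fun N : ℝ => N⁻¹ ^ 4) := by
  have hπs : π * s ≠ 0 := by positivity
  have hexpansion := (isBigO_sq_div_sin_sq_sub.comp_tendsto
    (tendsto_const_div_atTop_nhdsNE_zero hπs)).const_mul_left (-(sin (π * s) ^ 2 / (π * s) ^ 2))
  have hscale : (fun N : ℝ => (π * s / N) ^ 4) =O[atTop] (fun N => N⁻¹ ^ 4) :=
    (isBigO_const_mul_self ((π * s) ^ 4) _ _).congr_left fun N => by ring
  refine (hexpansion.trans hscale).congr_left fun N => ?_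
  simp only [Function.comp_apply, cueKdiff_zero, cueKdiff_neg, ← sq, cueKdiff_sq N hs.ne']
  field_simp
  ring
end
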